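/- arXiv:1407.6977 — 4 statements merged into one kernel-verified Lean document; each statement's English description precedes it below -/
import Mathlib

section
/- For every ν > 0, the function x ↦ x^ν K_ν(x) is positive, continuous, and (weakly) decreasing on (0, ∞), where K_ν is the modified Bessel function of the second kind. -/
/-!
Splitting `cosh (ν t)` into exponentials gives `2 K_ν(x) = ∫_ℝ e^(ν t - x cosh t) dt`, and the
substitution `v = (x / 2) e^t` turns this into
`x ^ ν K_ν(x) = 2 ^ (ν - 1) ∫₀^∞ v ^ (ν - 1) e^(-v - x² / (4 v)) dv` (DLMF 10.32.10 with `ν ↦ -ν`).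
The new integrand is positive and decreasing in `x > 0`, and it is dominated near `x₀` by its
value at `x₀ / 2`, which gives continuity.
-/

open MeasureTheory Real Set

/-- Modified Bessel function of the second kind, via the integral representation
`K_ν(x) = ∫₀^∞ cosh(ν t) e^{-x cosh t} dt`. -/
noncomputable def besselK (ν x : ℝ) : ℝ :=
  ∫ t in Set.Ioi (0 : ℝ), Real.cosh (ν * t) * Real.exp (-x * Real.cosh t)

lemma sq_div_four_le_cosh (t : ℝ) : t ^ 2 / 4 ≤ cosh t := by
  have hexp := quadratic_le_exp_of_nonneg (abs_nonneg t)
  rw [← cosh_abs, cosh_eq]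
  nlinarith [exp_pos (-|t|), sq_abs t, abs_nonneg t]

lemma integrable_exp_mul_sub_mul_cosh (a : ℝ) {c : ℝ} (hc : 0 < c) :
    Integrable fun t : ℝ => exp (a * t - c * cosh t) := by
  have hgauss : Integrable fun t : ℝ => exp (a ^ 2 / c) * exp (-(c / 4) * (t - 2 * a / c) ^ 2) :=
    ((integrable_exp_neg_mul_sq (by positivity)).comp_sub_right _).const_mul _
  refine hgauss.mono' (by fun_prop) (ae_of_all _ fun t => ?_)
  rw [norm_of_nonneg (exp_pos _).le, ← exp_add, exp_le_exp]
  have hcosh := mul_le_mul_of_nonneg_left (sq_div_four_le_cosh t) hc.le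
  have hsquare : a * t - c * (t ^ 2 / 4) = a ^ 2 / c + -(c / 4) * (t - 2 * a / c) ^ 2 := by
    field_simp
    ring
  linarith

lemma integral_eq_integral_Ioi_add_comp_neg {E : Type*} [NormedAddCommGroup E] [NormedSpace ℝ E]
    {f : ℝ → E} (hf : Integrable f) : ∫ t, f t = ∫ t in Ioi 0, (f t + f (-t)) := by
  rw [← intervalIntegral.integral_Iic_add_Ioi (b := 0) hf.integrableOn hf.integrableOn,
    integral_add hf.integrableOn hf.comp_neg.integrableOn, integral_comp_neg_Ioi, neg_zero,
    add_comm]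

lemma integral_exp_mul_sub_mul_cosh (ν : ℝ) {x : ℝ} (hx : 0 < x) :
    ∫ t, exp (ν * t - x * cosh t) = 2 * besselK ν x := by
  rw [integral_eq_integral_Ioi_add_comp_neg (integrable_exp_mul_sub_mul_cosh ν hx), besselK,
    ← integral_const_mul]
  congr 1 with t
  rw [cosh_eq (ν * t)]
  simp only [cosh_neg, sub_eq_add_neg, exp_add, mul_neg, neg_mul]
  ring

section ChangeOfVariables

variable {E : Type*} [NormedAddCommGroup E] [NormedSpace ℝ E] {b : ℝ}

lemma image_univ_const_mul_exp (hb : 0 < b) : (fun t => b * exp t) '' univ = Ioi 0 := by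
  rw [show (fun t => b * exp t) = (b * ·) ∘ exp from rfl, image_comp, image_univ, range_exp,
    image_const_mul_Ioi_zero hb]

lemma hasDerivWithinAt_const_mul_exp (t : ℝ) :
    HasDerivWithinAt (fun t => b * exp t) (b * exp t) univ t :=
  ((hasDerivAt_exp t).const_mul b).hasDerivWithinAt

lemma injective_const_mul_exp (hb : 0 < b) : Function.Injective fun t => b * exp t :=
  fun _ _ h => exp_injective (mul_left_cancel₀ hb.ne' h)

lemma integral_const_mul_exp_smul (g : ℝ → E) (hb : 0 < b) :
    ∫ t, (b * exp t) • g (b * exp t) = ∫ v in Ioi 0, g v := by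
  have := integral_image_eq_integral_abs_deriv_smul MeasurableSet.univ
    (fun t _ => hasDerivWithinAt_const_mul_exp t) (injective_const_mul_exp hb).injOn g
  simpa [image_univ_const_mul_exp hb, abs_of_pos, hb] using this.symm

lemma integrable_const_mul_exp_smul_iff (g : ℝ → E) (hb : 0 < b) :
    Integrable (fun t => (b * exp t) • g (b * exp t)) ↔ IntegrableOn g (Ioi 0) := by
  have := integrableOn_image_iff_integrableOn_abs_deriv_smul MeasurableSet.univ
    (fun t _ => hasDerivWithinAt_const_mul_exp t) (injective_const_mul_exp hb).injOn g
  simpa [image_univ_const_mul_exp hb, abs_of_pos, hb] using this.symm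

end ChangeOfVariables

noncomputable def besselKIntegrand (ν x v : ℝ) : ℝ :=
  v ^ (ν - 1) * exp (-v - x ^ 2 / (4 * v))

lemma besselKIntegrand_pos (ν x : ℝ) {v : ℝ} (hv : 0 < v) : 0 < besselKIntegrand ν x v := by
  unfold besselKIntegrand
  positivity

lemma antitoneOn_besselKIntegrand (ν : ℝ) {v : ℝ} (hv : 0 < v) :
    AntitoneOn (fun x => besselKIntegrand ν x v) (Ici 0) := by
  intro a ha b _ hab
  simp only [besselKIntegrand]
  gcongr

lemma rpow_mul_exp_mul_sub_mul_cosh (ν t : ℝ) {x : ℝ} (hx : 0 < x) :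
    (x / 2) ^ ν * exp (ν * t - x * cosh t) =
      (x / 2 * exp t) • besselKIntegrand ν x (x / 2 * exp t) := by
  have hv : 0 < x / 2 * exp t := by positivity
  rw [smul_eq_mul, besselKIntegrand, rpow_sub_one hv.ne', ← mul_assoc, mul_div_cancel₀ _ hv.ne',
    mul_rpow (by positivity) (exp_pos t).le, ← exp_mul, mul_assoc, ← exp_add]
  congr 2
  rw [cosh_eq, exp_neg]
  field_simp
  ring

lemma integrableOn_besselKIntegrand (ν : ℝ) {x : ℝ} (hx : 0 < x) :
    IntegrableOn (besselKIntegrand ν x) (Ioi 0) := by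
  rw [← integrable_const_mul_exp_smul_iff _ (half_pos hx)]
  exact ((integrable_exp_mul_sub_mul_cosh ν hx).const_mul _).congr
    (ae_of_all _ fun t => rpow_mul_exp_mul_sub_mul_cosh ν t hx)

lemma rpow_mul_besselK (ν : ℝ) {x : ℝ} (hx : 0 < x) :
    x ^ ν * besselK ν x = 2 ^ (ν - 1) * ∫ v in Ioi 0, besselKIntegrand ν x v := by
  rw [← integral_const_mul_exp_smul _ (half_pos hx)]
  simp_rw [← rpow_mul_exp_mul_sub_mul_cosh ν _ hx]
  rw [integral_const_mul, integral_exp_mul_sub_mul_cosh ν hx, div_rpow hx.le zero_le_two,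
    rpow_sub_one two_ne_zero]
  have : (0 : ℝ) < 2 ^ ν := by positivity
  field_simp

lemma setIntegral_pos_of_forall_pos {f : ℝ → ℝ} {a : ℝ} (hf : ∀ t ∈ Ioi a, 0 < f t)
    (hfi : IntegrableOn f (Ioi a)) : 0 < ∫ t in Ioi a, f t := by
  rw [setIntegral_pos_iff_support_of_nonneg_ae
    ((ae_restrict_iff' measurableSet_Ioi).2 (ae_of_all _ fun t ht => (hf t ht).le)) hfi,
    inter_eq_right.2 fun t ht => Function.mem_support.2 (hf t ht).ne', volume_Ioi]
  exact ENNReal.zero_lt_top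

lemma continuousOn_integral_besselKIntegrand (ν : ℝ) :
    ContinuousOn (fun x => ∫ v in Ioi 0, besselKIntegrand ν x v) (Ioi 0) := by
  intro x₀ hx₀
  have hx₀' : 0 < x₀ / 2 := half_pos hx₀
  refine (continuousAt_of_dominated (bound := besselKIntegrand ν (x₀ / 2)) ?_ ?_
    (integrableOn_besselKIntegrand ν hx₀') ?_).continuousWithinAt
  · exact .of_forall fun x =>
      (by unfold besselKIntegrand; fun_prop : Measurable _).aestronglyMeasurable
  · filter_upwards [Ioi_mem_nhds (half_lt_self hx₀)] with x hx
    refine (ae_restrict_iff' measurableSet_Ioi).2 (ae_of_all _ fun v hv => ?_)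
    rw [norm_of_nonneg (besselKIntegrand_pos ν x hv).le]
    exact antitoneOn_besselKIntegrand ν hv hx₀'.le (hx₀'.trans hx).le hx.le
  · exact ae_of_all _ fun v => by unfold besselKIntegrand; fun_prop

theorem stmt2_general (ν : ℝ) :
    (∀ x ∈ Set.Ioi (0 : ℝ), 0 < x ^ ν * besselK ν x) ∧
    ContinuousOn (fun x : ℝ => x ^ ν * besselK ν x) (Set.Ioi 0) ∧
    AntitoneOn (fun x : ℝ => x ^ ν * besselK ν x) (Set.Ioi 0) := by
  refine ⟨fun x hx => ?_, ?_, fun a ha b hb hab => ?_⟩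
  · rw [rpow_mul_besselK ν hx]
    exact mul_pos (by positivity) (setIntegral_pos_of_forall_pos
      (fun v hv => besselKIntegrand_pos ν x hv) (integrableOn_besselKIntegrand ν hx))
  · exact (continuousOn_const.mul (continuousOn_integral_besselKIntegrand ν)).congr
      fun x hx => rpow_mul_besselK ν hx
  · dsimp only
    rw [rpow_mul_besselK ν ha, rpow_mul_besselK ν hb]
    refine mul_le_mul_of_nonneg_left (setIntegral_mono_on (integrableOn_besselKIntegrand ν hb)
      (integrableOn_besselKIntegrand ν ha) measurableSet_Ioi fun v hv => ?_) (by positivity)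
    exact antitoneOn_besselKIntegrand ν hv (Ioi_subset_Ici_self ha) (Ioi_subset_Ici_self hb) hab

/-- For `ν > 0`, the function `x ↦ x^ν K_ν(x)` is positive, continuous and
(weakly) decreasing on `(0, ∞)`. -/
theorem stmt2 (ν : ℝ) (hν : 0 < ν) :
    (∀ x ∈ Set.Ioi (0 : ℝ), 0 < x ^ ν * besselK ν x) ∧
    ContinuousOn (fun x : ℝ => x ^ ν * besselK ν x) (Set.Ioi 0) ∧
    AntitoneOn (fun x : ℝ => x ^ ν * besselK ν x) (Set.Ioi 0) :=
  stmt2_general ν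
end

section
/- Let (f_n) be a sequence of functions from ℝ to [0,1] such that each f_n is strictly decreasing with limit 1 at -∞ and 0 at +∞, and such that for every δ > 0, f_n converges uniformly on ℝ \ [-δ, δ] to the indicator function 1_{x ≤ 0}. Let (X_n) be real random variables such that for every r ∈ ℝ, E[f_n(X_n - r)] → p(r), where p is a continuous cumulative distribution function. Then X_n converges weakly in distribution to a random variable X with P(X ≤ r) = p(r). -/
open MeasureTheory Filter Topology

/-!
Away from `[-δ, δ]` the function `f n` is uniformly `ε`-close to the step `1_{x ≤ 0}`, so
pointwise `1_{X_n ≤ r} - ε ≤ f n (X_n - (r + δ))` and `f n (X_n - (r - δ)) ≤ 1_{X_n ≤ r} + ε`.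
Taking expectations squeezes `P(X_n ≤ r)` between `E f n (X_n - (r - δ)) - ε` and
`E f n (X_n - (r + δ)) + ε`, whose limits `p (r ∓ δ)` are close to `p r` by continuity of `p`.
-/

section CloseToStep

variable {Ω : Type*} [MeasurableSpace Ω] {μ : Measure Ω} [IsProbabilityMeasure μ]
  {g : ℝ → ℝ} {Y : Ω → ℝ} {δ ε : ℝ}

lemma integrable_comp_of_mem_Icc (hg : Measurable g) (hg01 : ∀ x, g x ∈ Set.Icc (0 : ℝ) 1)
    (hY : Measurable Y) : Integrable (fun ω => g (Y ω)) μ :=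
  .of_bound (hg.comp hY).aestronglyMeasurable 1 <| .of_forall fun ω => by
    rw [Real.norm_eq_abs, abs_of_nonneg (hg01 _).1]
    exact (hg01 _).2

lemma pos_of_forall_dist_lt {h : ℝ → ℝ}
    (hclose : ∀ x, δ ≤ |x| → dist (h x) (g x) < ε) : 0 < ε :=
  dist_nonneg.trans_lt (hclose |δ| (by rw [abs_abs]; exact le_abs_self δ))

lemma measureReal_sub_le_integral_comp_sub_add (hg : Measurable g)
    (hg01 : ∀ x, g x ∈ Set.Icc (0 : ℝ) 1) (hY : Measurable Y)
    (hδ : 0 ≤ δ) (hclose : ∀ x, δ ≤ |x| → dist (if x ≤ 0 then (1 : ℝ) else 0) (g x) < ε)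
    (r : ℝ) : μ.real {ω | Y ω ≤ r} - ε ≤ ∫ ω, g (Y ω - (r + δ)) ∂μ := by
  have hA : MeasurableSet {ω | Y ω ≤ r} := measurableSet_le hY measurable_const
  have hpointwise : ∀ ω, {ω | Y ω ≤ r}.indicator 1 ω - ε ≤ g (Y ω - (r + δ)) := by
    intro ω
    by_cases hω : Y ω ≤ r
    · have h := hclose (Y ω - (r + δ)) (by rw [abs_of_nonpos (by linarith)]; linarith)
      rw [if_pos (by linarith), Real.dist_eq] at h
      simp only [Set.indicator_of_mem (show ω ∈ {ω | Y ω ≤ r} from hω), Pi.one_apply]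
      linarith [(abs_lt.1 h).2]
    · simp only [Set.indicator_of_notMem (show ω ∉ {ω | Y ω ≤ r} from hω)]
      linarith [(hg01 (Y ω - (r + δ))).1, pos_of_forall_dist_lt hclose]
  have hind : Integrable ({ω | Y ω ≤ r}.indicator (1 : Ω → ℝ)) μ :=
    (integrable_const 1).indicator hA
  calc μ.real {ω | Y ω ≤ r} - ε = ∫ ω, ({ω | Y ω ≤ r}.indicator 1 ω - ε) ∂μ := by
        rw [integral_sub hind (integrable_const ε),
          integral_indicator_one hA, integral_const, probReal_univ, one_smul]
    _ ≤ ∫ ω, g (Y ω - (r + δ)) ∂μ :=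
        integral_mono (hind.sub (integrable_const ε))
          (integrable_comp_of_mem_Icc hg hg01 (hY.sub measurable_const)) hpointwise

lemma integral_comp_sub_sub_le_measureReal_add (hg : Measurable g)
    (hg01 : ∀ x, g x ∈ Set.Icc (0 : ℝ) 1) (hY : Measurable Y)
    (hδ : 0 ≤ δ) (hclose : ∀ x, δ ≤ |x| → dist (if x ≤ 0 then (1 : ℝ) else 0) (g x) < ε)
    (r : ℝ) : ∫ ω, g (Y ω - (r - δ)) ∂μ ≤ μ.real {ω | Y ω ≤ r} + ε := by
  have hA : MeasurableSet {ω | Y ω ≤ r} := measurableSet_le hY measurable_const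
  have hpointwise : ∀ ω, g (Y ω - (r - δ)) ≤ {ω | Y ω ≤ r}.indicator 1 ω + ε := by
    intro ω
    by_cases hω : Y ω ≤ r
    · simp only [Set.indicator_of_mem (show ω ∈ {ω | Y ω ≤ r} from hω), Pi.one_apply]
      linarith [(hg01 (Y ω - (r - δ))).2, pos_of_forall_dist_lt hclose]
    · have h := hclose (Y ω - (r - δ)) (by rw [abs_of_pos (by linarith)]; linarith)
      rw [if_neg (by linarith), Real.dist_eq] at h
      simp only [Set.indicator_of_notMem (show ω ∉ {ω | Y ω ≤ r} from hω)]
      linarith [(abs_lt.1 h).1]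
  have hind : Integrable ({ω | Y ω ≤ r}.indicator (1 : Ω → ℝ)) μ :=
    (integrable_const 1).indicator hA
  calc ∫ ω, g (Y ω - (r - δ)) ∂μ ≤ ∫ ω, ({ω | Y ω ≤ r}.indicator 1 ω + ε) ∂μ :=
        integral_mono (integrable_comp_of_mem_Icc hg hg01 (hY.sub measurable_const))
          (hind.add (integrable_const ε)) hpointwise
    _ = μ.real {ω | Y ω ≤ r} + ε := by
        rw [integral_add hind (integrable_const ε),
          integral_indicator_one hA, integral_const, probReal_univ, one_smul]

end CloseToStep

section Continuity

variable {p : ℝ → ℝ} {r : ℝ}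

lemma exists_pos_lt_comp_sub {a : ℝ} (hp : ContinuousAt p r) (ha : a < p r) :
    ∃ δ > 0, a < p (r - δ) := by
  have hshift : Tendsto (fun δ => r - δ) (𝓝[>] 0) (𝓝 r) := by
    simpa using ((continuous_sub_left r).tendsto 0).mono_left nhdsWithin_le_nhds
  exact (eventually_mem_nhdsWithin.and
    (hshift.eventually (hp.eventually (lt_mem_nhds ha)))).exists

lemma exists_pos_comp_add_lt {b : ℝ} (hp : ContinuousAt p r) (hb : p r < b) :
    ∃ δ > 0, p (r + δ) < b := by
  have hshift : Tendsto (fun δ => r + δ) (𝓝[>] 0) (𝓝 r) := by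
    simpa using ((continuous_const_add r).tendsto 0).mono_left nhdsWithin_le_nhds
  exact (eventually_mem_nhdsWithin.and
    (hshift.eventually (hp.eventually (gt_mem_nhds hb)))).exists

end Continuity

theorem stmt9_general {Ω : Type*} [MeasurableSpace Ω] (μ : Measure Ω) [IsProbabilityMeasure μ]
    (f : ℕ → ℝ → ℝ)
    (hrange : ∀ n x, f n x ∈ Set.Icc (0 : ℝ) 1)
    (hanti : ∀ n, StrictAnti (f n))
    (hunif : ∀ δ > (0 : ℝ), TendstoUniformlyOn (fun n x => f n x)
      (fun x => if x ≤ 0 then (1 : ℝ) else 0) atTop {x : ℝ | δ ≤ |x|})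
    (X : ℕ → Ω → ℝ) (hX : ∀ n, Measurable (X n))
    (p : ℝ → ℝ)
    (hp_cont : Continuous p)
    (hE : ∀ r : ℝ, Tendsto (fun n => ∫ ω, f n (X n ω - r) ∂μ) atTop (nhds (p r))) :
    ∀ r : ℝ, Tendsto (fun n => (μ {ω | X n ω ≤ r}).toReal) atTop (nhds (p r)) := by
  intro r
  have hmeas : ∀ n, Measurable (f n) := fun n => (hanti n).antitone.measurable
  have hclose : ∀ δ > 0, ∀ η > 0, ∀ᶠ n in atTop,
      ∀ x, δ ≤ |x| → dist (if x ≤ 0 then (1 : ℝ) else 0) (f n x) < η :=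
    fun δ hδ => Metric.tendstoUniformlyOn_iff.1 (hunif δ hδ)
  refine tendsto_order.2 ⟨fun a ha => ?_, fun b hb => ?_⟩
  · obtain ⟨δ, hδ, hpa⟩ := exists_pos_lt_comp_sub hp_cont.continuousAt ha
    have hη : 0 < (p (r - δ) - a) / 2 := by linarith
    filter_upwards [hclose δ hδ _ hη,
      (hE (r - δ)).eventually (lt_mem_nhds (sub_lt_self _ hη))]
      with n hn hEn
    have hbound := integral_comp_sub_sub_le_measureReal_add (μ := μ) (hmeas n) (hrange n) (hX n)
      hδ.le hn r
    rw [Measure.real_def] at hbound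
    linarith
  · obtain ⟨δ, hδ, hpb⟩ := exists_pos_comp_add_lt hp_cont.continuousAt hb
    have hη : 0 < (b - p (r + δ)) / 2 := by linarith
    filter_upwards [hclose δ hδ _ hη,
      (hE (r + δ)).eventually (gt_mem_nhds (lt_add_of_pos_right _ hη))]
      with n hn hEn
    have hbound := measureReal_sub_le_integral_comp_sub_add (μ := μ) (hmeas n) (hrange n) (hX n)
      hδ.le hn r
    rw [Measure.real_def] at hbound
    linarith

/-- Lemma 4.1.39 of Borodin–Corwin: if `f_n : ℝ → [0,1]` are strictly decreasing with
limits 1 at `-∞` and 0 at `+∞`, converging uniformly to `1_{x≤0}` away from any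
neighborhood of `0`, and `E[f_n(X_n - r)] → p(r)` for a continuous CDF `p`, then the
distribution functions of `X_n` converge to `p` pointwise (i.e. `X_n ⇒ X` with
`P(X ≤ r) = p(r)`). -/
theorem stmt9 {Ω : Type*} [MeasurableSpace Ω] (μ : Measure Ω) [IsProbabilityMeasure μ]
    (f : ℕ → ℝ → ℝ)
    (hrange : ∀ n x, f n x ∈ Set.Icc (0 : ℝ) 1)
    (hanti : ∀ n, StrictAnti (f n))
    (hlim_bot : ∀ n, Tendsto (f n) atBot (nhds 1))
    (hlim_top : ∀ n, Tendsto (f n) atTop (nhds 0))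
    (hunif : ∀ δ > (0 : ℝ), TendstoUniformlyOn (fun n x => f n x)
      (fun x => if x ≤ 0 then (1 : ℝ) else 0) atTop {x : ℝ | δ ≤ |x|})
    (X : ℕ → Ω → ℝ) (hX : ∀ n, Measurable (X n))
    (p : ℝ → ℝ)
    (hp_cont : Continuous p) (hp_mono : Monotone p)
    (hp_bot : Tendsto p atBot (nhds 0)) (hp_top : Tendsto p atTop (nhds 1))
    (hE : ∀ r : ℝ, Tendsto (fun n => ∫ ω, f n (X n ω - r) ∂μ) atTop (nhds (p r))) :
    ∀ r : ℝ, Tendsto (fun n => (μ {ω | X n ω ≤ r}).toReal) atTop (nhds (p r)) :=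
  stmt9_general μ f hrange hanti hunif X hX p hp_cont hE
end

section
/- (q-binomial theorem) For all complex a, x, q with |x| < 1 and |q| < 1, ∑_{k=0}^∞ ((a;q)_k / (q;q)_k) x^k = (ax;q)_∞ / (x;q)_∞, where (a;q)_k = ∏_{i=0}^{k-1}(1 - a q^i) and (a;q)_∞ = ∏_{i=0}^∞ (1 - a q^i). -/
open Finset

/-- The finite q-Pochhammer symbol `(a;q)_k = ∏_{i=0}^{k-1} (1 - a q^i)`. -/
noncomputable def qPoch (a q : ℂ) (k : ℕ) : ℂ :=
  ∏ i ∈ Finset.range k, (1 - a * q ^ i)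

/-- The infinite q-Pochhammer symbol `(a;q)_∞ = ∏_{i=0}^∞ (1 - a q^i)`. -/
noncomputable def qPochInf (a q : ℂ) : ℂ :=
  ∏' i : ℕ, (1 - a * q ^ i)

/-!
Write `F(y) = ∑ c_k y^k` with `c_k = (a;q)_k / (q;q)_k`. Since
`c_{k+1} (1 - q^{k+1}) = c_k (1 - a q^k)`, comparing coefficients gives the functional equation
`(1 - y) F(y) = (1 - a y) F(q y)`. Iterating it `n` times yields
`F(x) (x;q)_n = F(x q^n) (ax;q)_n`, and as `n → ∞` we have `F(x q^n) → F(0) = 1`.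
The factors `c_{i+1} / c_i = 1 + O(|q|^i)` keep the coefficients bounded, which gives both the
convergence of `F` on the unit disc and its continuity at `0`.
-/

open Filter Topology

lemma norm_mul_pow_le {c q : ℂ} (hq : ‖q‖ ≤ 1) (n : ℕ) : ‖c * q ^ n‖ ≤ ‖c‖ := by
  rw [norm_mul, norm_pow]
  exact mul_le_of_le_one_right (norm_nonneg c) (pow_le_one₀ (norm_nonneg q) hq)

lemma one_sub_ne_zero_of_norm_lt_one {z : ℂ} (hz : ‖z‖ < 1) : 1 - z ≠ 0 := by
  rintro h
  simp [← sub_eq_zero.mp h] at hz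

lemma qPoch_succ (a q : ℂ) (k : ℕ) : qPoch a q (k + 1) = qPoch a q k * (1 - a * q ^ k) :=
  prod_range_succ _ _

lemma summable_norm_mul_pow (c : ℂ) {q : ℂ} (hq : ‖q‖ < 1) :
    Summable fun i : ℕ => ‖c * q ^ i‖ := by
  simpa [norm_mul, norm_pow] using (summable_geometric_of_lt_one (norm_nonneg q) hq).mul_left ‖c‖

lemma multipliable_one_sub_mul_pow (c : ℂ) {q : ℂ} (hq : ‖q‖ < 1) :
    Multipliable fun i : ℕ => 1 - c * q ^ i := by
  simp_rw [sub_eq_add_neg]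
  exact multipliable_one_add_of_summable (by simpa using summable_norm_mul_pow c hq)

lemma tendsto_qPoch_atTop (c : ℂ) {q : ℂ} (hq : ‖q‖ < 1) :
    Tendsto (qPoch c q) atTop (𝓝 (qPochInf c q)) :=
  (multipliable_one_sub_mul_pow c hq).hasProd.tendsto_prod_nat

lemma qPochInf_ne_zero {c q : ℂ} (hc : ‖c‖ < 1) (hq : ‖q‖ < 1) : qPochInf c q ≠ 0 := by
  simp_rw [qPochInf, sub_eq_add_neg]
  refine tprod_one_add_ne_zero_of_summable (fun i => ?_) (by simpa using summable_norm_mul_pow c hq)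
  rw [← sub_eq_add_neg]
  exact one_sub_ne_zero_of_norm_lt_one ((norm_mul_pow_le hq.le i).trans_lt hc)

noncomputable def qBinomialSeriesCoeff (a q : ℂ) (k : ℕ) : ℂ :=
  qPoch a q k / qPoch q q k

noncomputable def qBinomialSeries (a q y : ℂ) : ℂ :=
  ∑' k : ℕ, qBinomialSeriesCoeff a q k * y ^ k

lemma qBinomialSeriesCoeff_zero (a q : ℂ) : qBinomialSeriesCoeff a q 0 = 1 := by
  simp [qBinomialSeriesCoeff, qPoch]

lemma qBinomialSeriesCoeff_succ_mul {q : ℂ} (a : ℂ) (hq : ‖q‖ < 1) (k : ℕ) :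
    qBinomialSeriesCoeff a q (k + 1) * (1 - q ^ (k + 1))
      = qBinomialSeriesCoeff a q k * (1 - a * q ^ k) := by
  have hk : 1 - q ^ (k + 1) ≠ 0 := one_sub_ne_zero_of_norm_lt_one <| by
    simpa [norm_pow] using pow_lt_one₀ (norm_nonneg q) hq k.succ_ne_zero
  rw [qBinomialSeriesCoeff, qBinomialSeriesCoeff, qPoch_succ, qPoch_succ, ← pow_succ']
  field_simp

lemma qBinomialSeriesCoeff_eq_prod (a q : ℂ) (k : ℕ) :
    qBinomialSeriesCoeff a q k = ∏ i ∈ range k, (1 - a * q ^ i) / (1 - q ^ (i + 1)) := by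
  simp_rw [qBinomialSeriesCoeff, qPoch, prod_div_distrib, pow_succ']

lemma norm_one_sub_mul_pow_div_le (a : ℂ) {q : ℂ} (hq : ‖q‖ < 1) (i : ℕ) :
    ‖(1 - a * q ^ i) / (1 - q ^ (i + 1))‖ ≤ 1 + ‖q - a‖ / (1 - ‖q‖) * ‖q‖ ^ i := by
  have hden : 1 - ‖q‖ ≤ ‖1 - q ^ (i + 1)‖ := by
    have := norm_sub_norm_le (1 : ℂ) (q ^ (i + 1))
    rw [norm_one, norm_pow] at this
    linarith [pow_le_of_le_one (norm_nonneg q) hq.le i.add_one_ne_zero]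
  have hpos : 0 < 1 - ‖q‖ := sub_pos.mpr hq
  have hne : 1 - q ^ (i + 1) ≠ 0 := norm_pos_iff.mp (hpos.trans_le hden)
  have hsplit : (1 - a * q ^ i) / (1 - q ^ (i + 1)) = 1 + q ^ i * (q - a) / (1 - q ^ (i + 1)) := by
    field_simp
    ring
  calc ‖(1 - a * q ^ i) / (1 - q ^ (i + 1))‖
      ≤ 1 + ‖q‖ ^ i * ‖q - a‖ / ‖1 - q ^ (i + 1)‖ := by
        rw [hsplit, ← norm_pow, ← norm_mul, ← norm_div, ← norm_one (α := ℂ)]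
        exact norm_add_le _ _
    _ ≤ 1 + ‖q‖ ^ i * ‖q - a‖ / (1 - ‖q‖) := by gcongr
    _ = 1 + ‖q - a‖ / (1 - ‖q‖) * ‖q‖ ^ i := by ring

lemma exists_norm_qBinomialSeriesCoeff_le (a : ℂ) {q : ℂ} (hq : ‖q‖ < 1) :
    ∃ C, ∀ k, ‖qBinomialSeriesCoeff a q k‖ ≤ C := by
  set M := ‖q - a‖ / (1 - ‖q‖)
  refine ⟨Real.exp (M / (1 - ‖q‖)), fun k => ?_⟩
  calc ‖qBinomialSeriesCoeff a q k‖
      ≤ ∏ i ∈ range k, (1 + M * ‖q‖ ^ i) := by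
        rw [qBinomialSeriesCoeff_eq_prod, norm_prod]
        exact prod_le_prod (fun _ _ => norm_nonneg _)
          fun i _ => norm_one_sub_mul_pow_div_le a hq i
    _ ≤ Real.exp (∑ i ∈ range k, M * ‖q‖ ^ i) :=
        Real.prod_one_add_le_exp_sum _ fun i => by positivity
    _ ≤ Real.exp (M / (1 - ‖q‖)) := by
        rw [← mul_sum, range_eq_Ico, div_eq_mul_one_div M]
        gcongr
        simpa using geom_sum_Ico_le_of_lt_one (m := 0) (n := k) (norm_nonneg q) hq

lemma summable_qBinomialSeriesCoeff_mul_pow (a : ℂ) {q y : ℂ} (hq : ‖q‖ < 1) (hy : ‖y‖ < 1) :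
    Summable fun k => qBinomialSeriesCoeff a q k * y ^ k := by
  obtain ⟨C, hC⟩ := exists_norm_qBinomialSeriesCoeff_le a hq
  refine .of_norm_bounded ((summable_geometric_of_lt_one (norm_nonneg y) hy).mul_left C)
    fun k => ?_
  rw [norm_mul, norm_pow]
  exact mul_le_mul_of_nonneg_right (hC k) (by positivity)

lemma qBinomialSeries_mul_one_sub (a : ℂ) {q y : ℂ} (hq : ‖q‖ < 1) (hy : ‖y‖ < 1) :
    qBinomialSeries a q y * (1 - y) = qBinomialSeries a q (q * y) * (1 - a * y) := by
  set c := qBinomialSeriesCoeff a q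
  have hqy : ‖q * y‖ < 1 := by
    rw [norm_mul]
    exact mul_lt_one_of_nonneg_of_lt_one_left (norm_nonneg q) hq hy.le
  have hs := summable_qBinomialSeriesCoeff_mul_pow a hq hy
  have hs' := summable_qBinomialSeriesCoeff_mul_pow a hq hqy
  set u : ℕ → ℂ := fun k => c k * y ^ k - c k * (q * y) ^ k
  have hu : Summable u := hs.sub hs'
  have hu_succ : ∀ k, u (k + 1) = y * (c k * y ^ k - a * (c k * (q * y) ^ k)) := by
    intro k
    have := qBinomialSeriesCoeff_succ_mul a hq k
    calc u (k + 1) = c (k + 1) * (1 - q ^ (k + 1)) * y ^ (k + 1) := by simp only [u]; ring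
      _ = _ := by rw [this]; ring
  have hdiff : qBinomialSeries a q y - qBinomialSeries a q (q * y) = ∑' k, u k :=
    (hs.tsum_sub hs').symm
  -- `u 0 = 0`, so shifting the index does not change `∑ u`
  have hshift : ∑' k, u k = y * (qBinomialSeries a q y - a * qBinomialSeries a q (q * y)) := by
    rw [hu.tsum_eq_zero_add, tsum_congr hu_succ, tsum_mul_left, hs.tsum_sub (hs'.mul_left a),
      tsum_mul_left]
    simp [u, qBinomialSeries, c]
  linear_combination hdiff + hshift

lemma tendsto_qBinomialSeries_nhds_zero (a : ℂ) {q : ℂ} (hq : ‖q‖ < 1) :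
    Tendsto (qBinomialSeries a q) (𝓝 0) (𝓝 1) := by
  obtain ⟨C, hC⟩ := exists_norm_qBinomialSeriesCoeff_le a hq
  have hbound : ∀ y : ℂ, ‖y‖ < 1 → ‖qBinomialSeries a q y - 1‖ ≤ C * ‖y‖ * (1 - ‖y‖)⁻¹ := by
    intro y hy
    rw [qBinomialSeries, (summable_qBinomialSeriesCoeff_mul_pow a hq hy).tsum_eq_zero_add,
      qBinomialSeriesCoeff_zero, pow_zero, one_mul, add_sub_cancel_left]
    refine tsum_of_norm_bounded ((hasSum_geometric_of_lt_one (norm_nonneg y) hy).mul_left _)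
      fun k => ?_
    rw [norm_mul, norm_pow, pow_succ', ← mul_assoc]
    exact mul_le_mul_of_nonneg_right (mul_le_mul_of_nonneg_right (hC _) (norm_nonneg y))
      (pow_nonneg (norm_nonneg y) k)
  have hlim : Tendsto (fun y : ℂ => C * ‖y‖ * (1 - ‖y‖)⁻¹) (𝓝 0) (𝓝 0) := by
    have : ContinuousAt (fun y : ℂ => C * ‖y‖ * (1 - ‖y‖)⁻¹) 0 := by
      fun_prop (disch := simp)
    simpa using this.tendsto
  rw [← tendsto_sub_nhds_zero_iff]
  refine squeeze_zero_norm' ?_ hlim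
  filter_upwards [Metric.ball_mem_nhds (0 : ℂ) one_pos] with y hy
  exact hbound y (by simpa using hy)

lemma qBinomialSeries_mul_qPoch (a : ℂ) {q x : ℂ} (hq : ‖q‖ < 1) (hx : ‖x‖ < 1) (n : ℕ) :
    qBinomialSeries a q x * qPoch x q n
      = qBinomialSeries a q (x * q ^ n) * qPoch (a * x) q n := by
  induction n with
  | zero => simp [qPoch]
  | succ n ih =>
    have hfe := qBinomialSeries_mul_one_sub a hq ((norm_mul_pow_le hq.le n).trans_lt hx)
    rw [show q * (x * q ^ n) = x * q ^ (n + 1) by ring] at hfe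
    rw [qPoch_succ, qPoch_succ, ← mul_assoc, ih]
    linear_combination qPoch (a * x) q n * hfe

/-- The q-binomial theorem: for `|x| < 1` and `|q| < 1`,
`∑_k ((a;q)_k/(q;q)_k) x^k = (ax;q)_∞/(x;q)_∞`. -/
theorem stmt11 (a x q : ℂ) (hx : ‖x‖ < 1) (hq : ‖q‖ < 1) :
    ∑' k : ℕ, (qPoch a q k / qPoch q q k) * x ^ k
      = qPochInf (a * x) q / qPochInf x q := by
  change qBinomialSeries a q x = _
  have hxq : Tendsto (fun n => x * q ^ n) atTop (𝓝 0) := by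
    simpa using (tendsto_pow_atTop_nhds_zero_of_norm_lt_one hq).const_mul x
  have hlhs := (tendsto_qPoch_atTop x hq).const_mul (qBinomialSeries a q x)
  have hrhs := ((tendsto_qBinomialSeries_nhds_zero a hq).comp hxq).mul
    (tendsto_qPoch_atTop (a * x) hq)
  have hlim := tendsto_nhds_unique hlhs
    (hrhs.congr fun n => (qBinomialSeries_mul_qPoch a hq hx n).symm)
  rw [eq_div_iff (qPochInf_ne_zero hx hq), hlim, one_mul]
end

section
/- Let q_n ∈ (0,1) with q_n → 1, and define the q-exponential e_q(x) = 1/((1-q)x; q)_∞. Then e_{q_n}(x) converges to e^x uniformly for x in (-∞, 0]. -/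
open Filter Topology

/-- The q-exponential `e_q(x) = 1/((1-q)x;q)_∞` with
`((1-q)x;q)_∞ = ∏_{i≥0} (1 - (1-q) x q^i)`. -/
noncomputable def qExp (q x : ℝ) : ℝ :=
  (∏' i : ℕ, (1 - (1 - q) * x * q ^ i))⁻¹

private lemma sq_sum_ge (u : ℕ → ℝ) (hu : ∀ i, 0 ≤ u i) (s : Finset ℕ) :
    (∑ i ∈ s, (u i) ^ 2) ≤ (∑ i ∈ s, u i) ^ 2 := by
  induction s using Finset.cons_induction with
  | empty => simp
  | cons a s ha ih =>
    rw [Finset.sum_cons, Finset.sum_cons]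
    have h1 : 0 ≤ ∑ i ∈ s, u i := Finset.sum_nonneg fun i _ => hu i
    nlinarith [hu a]

private lemma prod_ge (u : ℕ → ℝ) (hu : ∀ i, 0 ≤ u i) (s : Finset ℕ) :
    1 + (∑ i ∈ s, u i) + ((∑ i ∈ s, u i) ^ 2 - ∑ i ∈ s, (u i) ^ 2) / 2
      ≤ ∏ i ∈ s, (1 + u i) := by
  induction s using Finset.cons_induction with
  | empty => simp
  | cons a s ha ih =>
    rw [Finset.sum_cons, Finset.sum_cons, Finset.prod_cons]
    have h1 : 0 ≤ ∑ i ∈ s, u i := Finset.sum_nonneg fun i _ => hu i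
    have h2 := sq_sum_ge u hu s
    have h3 : (0:ℝ) ≤ 1 + u a := by linarith [hu a]
    calc 1 + (u a + ∑ i ∈ s, u i) +
        ((u a + ∑ i ∈ s, u i) ^ 2 - ((u a) ^ 2 + ∑ i ∈ s, (u i) ^ 2)) / 2
        ≤ (1 + u a) *
          (1 + (∑ i ∈ s, u i) + ((∑ i ∈ s, u i) ^ 2 - ∑ i ∈ s, (u i) ^ 2) / 2) := by
          nlinarith [hu a]
      _ ≤ (1 + u a) * ∏ i ∈ s, (1 + u i) := mul_le_mul_of_nonneg_left ih h3

private lemma exp_le_one_add {u : ℝ} (hu : 0 ≤ u) : Real.exp (u - u ^ 2) ≤ 1 + u := by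
  have h0 : (0:ℝ) < 1 + u := by linarith
  have hlog := Real.log_le_sub_one_of_pos (x := (1 + u)⁻¹) (by positivity)
  rw [Real.log_inv] at hlog
  have hinv : 0 < (1 + u)⁻¹ := by positivity
  have hmc : (1 + u) * (1 + u)⁻¹ = 1 := mul_inv_cancel₀ (ne_of_gt h0)
  have h3 : (1 + u)⁻¹ ≤ 1 - u + u ^ 2 := by nlinarith
  have h1 : u - u ^ 2 ≤ Real.log (1 + u) := by linarith
  calc Real.exp (u - u ^ 2) ≤ Real.exp (Real.log (1 + u)) := Real.exp_le_exp.mpr h1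
    _ = 1 + u := Real.exp_log h0

private lemma one_le_prod_aux (f : ℕ → ℝ) (hf : ∀ i, 1 ≤ f i) (s : Finset ℕ) :
    1 ≤ ∏ i ∈ s, f i := by
  induction s using Finset.cons_induction with
  | empty => simp
  | cons a s ha ih => rw [Finset.prod_cons]; nlinarith [hf a]

private lemma final_bound {q y K P E : ℝ} (hq0 : 0 < q) (hq1 : q < 1) (hy0 : 0 ≤ y)
    (hK : K = (1 - q) * y ^ 2 / (1 + q)) (hPpos : 0 < P) (hE : 0 < E)
    (hPgeB : Real.exp (Real.log E - K) ≤ P)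
    (hPgeC : 1 + y + (y ^ 2 - K) / 2 ≤ P) :
    P⁻¹ ≤ E⁻¹ + 2 * (1 - q) / q := by
  have h1q : (0:ℝ) < 1 + q := by linarith
  have hK0 : 0 ≤ K := by
    rw [hK]; exact div_nonneg (mul_nonneg (by linarith) (sq_nonneg y)) h1q.le
  have h2 : K ≤ (1 - q) * y ^ 2 := by
    rw [hK, div_le_iff₀ h1q]
    nlinarith [mul_nonneg (show (0:ℝ) ≤ 1 - q by linarith) (sq_nonneg y), hq0]
  have hPbig : 1 + q * y ^ 2 / 2 ≤ P := by nlinarith [sq_nonneg y]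
  have hstep1 : E * (1 - K) ≤ P := by
    have h4 := Real.add_one_le_exp (-K)
    calc E * (1 - K) ≤ E * Real.exp (-K) := by
          apply mul_le_mul_of_nonneg_left (by linarith) hE.le
      _ = Real.exp (Real.log E - K) := by
          rw [← Real.exp_log hE, ← Real.exp_add, Real.exp_log hE]; ring_nf
      _ ≤ P := hPgeB
  have hnum : E - P ≤ K * E := by nlinarith
  have hid : P⁻¹ - E⁻¹ = (E - P) / (P * E) := by field_simp
  have h5 : (E - P) / (P * E) ≤ K / P := by
    rw [div_le_div_iff₀ (mul_pos hPpos hE) hPpos]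
    nlinarith [mul_le_mul_of_nonneg_right hnum hPpos.le]
  have h6 : K / P ≤ 2 * (1 - q) / q := by
    rw [div_le_div_iff₀ hPpos hq0]
    nlinarith [mul_le_mul_of_nonneg_right h2 hq0.le,
      mul_le_mul_of_nonneg_left hPbig (show (0:ℝ) ≤ 2 * (1 - q) by linarith)]
  linarith [hid ▸ (h5.trans h6)]

private lemma key {q x : ℝ} (hq0 : 0 < q) (hq1 : q < 1) (hx : x ≤ 0) :
    Real.exp x ≤ qExp q x ∧ qExp q x ≤ Real.exp x + 2 * (1 - q) / q := by
  set y : ℝ := -x with hy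
  have hy0 : 0 ≤ y := by simp only [hy]; linarith
  set t : ℝ := (1 - q) * y with ht
  have ht0 : 0 ≤ t := mul_nonneg (by linarith) hy0
  set u : ℕ → ℝ := fun i => t * q ^ i with hu
  have hu0 : ∀ i, 0 ≤ u i := fun i => mul_nonneg ht0 (pow_nonneg hq0.le i)
  have hsum : Summable u := (summable_geometric_of_lt_one hq0.le hq1).mul_left t
  have htsum : ∑' i, u i = y := by
    rw [hu, tsum_mul_left, tsum_geometric_of_lt_one hq0.le hq1, ht]
    have : (1:ℝ) - q ≠ 0 := by linarith
    field_simp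
  have hueq : (fun i => (u i) ^ 2) = fun i => t ^ 2 * (q ^ 2) ^ i := by
    funext i; simp only [hu]; ring
  have hq20 : (0:ℝ) ≤ q ^ 2 := by positivity
  have hq21 : q ^ 2 < 1 := by nlinarith
  have hsum2 : Summable (fun i => (u i) ^ 2) := by
    rw [hueq]; exact (summable_geometric_of_lt_one hq20 hq21).mul_left _
  set K : ℝ := (1 - q) * y ^ 2 / (1 + q) with hK
  have h1q : (0:ℝ) < 1 + q := by linarith
  have htsum2 : ∑' i, (u i) ^ 2 = K := by
    rw [hueq, tsum_mul_left, tsum_geometric_of_lt_one hq20 hq21, hK, ht]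
    have h2 : (1:ℝ) - q ^ 2 ≠ 0 := by nlinarith
    have h3 : (1:ℝ) - q ≠ 0 := by linarith
    field_simp
    ring
  have hK0 : 0 ≤ K := div_nonneg (mul_nonneg (by linarith) (by positivity)) h1q.le
  set f : ℕ → ℝ := fun i => 1 + u i with hf
  set g : Finset ℕ → ℝ := fun s => ∏ i ∈ s, f i with hg
  have hf1 : ∀ i, (1:ℝ) ≤ f i := fun i => by simp only [hf]; linarith [hu0 i]
  have hgmono : Monotone g := by
    intro s s' hss
    simp only [hg]
    rw [← Finset.prod_sdiff hss]
    exact le_mul_of_one_le_left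
      (le_trans zero_le_one (one_le_prod_aux f hf1 s))
      (one_le_prod_aux f hf1 _)
  have hgle : ∀ s, g s ≤ Real.exp y := by
    intro s
    calc g s ≤ ∏ i ∈ s, Real.exp (u i) :=
          Finset.prod_le_prod (fun i _ => by have := hu0 i; simp only [hf]; linarith)
            (fun i _ => by simpa [hf, add_comm] using Real.add_one_le_exp (u i))
      _ = Real.exp (∑ i ∈ s, u i) := (Real.exp_sum s u).symm
      _ ≤ Real.exp y := Real.exp_le_exp.mpr
          (htsum ▸ Summable.sum_le_tsum s (fun i _ => hu0 i) hsum)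
  have hbdd : BddAbove (Set.range g) := ⟨Real.exp y, by rintro _ ⟨s, rfl⟩; exact hgle s⟩
  set P : ℝ := ⨆ s, g s with hP
  have hprod : HasProd f P := tendsto_atTop_ciSup hgmono hbdd
  have hPle : P ≤ Real.exp y := ciSup_le hgle
  have hP1 : 1 ≤ P := by
    have := le_ciSup hbdd (∅ : Finset ℕ)
    simpa [hg] using this
  have hPpos : 0 < P := lt_of_lt_of_le one_pos hP1
  have hsy : HasSum u y := htsum ▸ hsum.hasSum
  have hsK : HasSum (fun i => (u i) ^ 2) K := htsum2 ▸ hsum2.hasSum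
  -- lower bound (B)
  have hPgeB : Real.exp (y - K) ≤ P := by
    refine le_of_tendsto_of_tendsto' ((Real.continuous_exp.tendsto _).comp (hsy.sub hsK))
      hprod fun s => ?_
    calc Real.exp (∑ i ∈ s, (u i - (u i) ^ 2))
        = ∏ i ∈ s, Real.exp (u i - (u i) ^ 2) := Real.exp_sum s _
      _ ≤ ∏ i ∈ s, f i :=
          Finset.prod_le_prod (fun i _ => (Real.exp_pos _).le)
            (fun i _ => by simpa [hf] using exp_le_one_add (hu0 i))
  -- lower bound (C)
  have hPgeC : 1 + y + (y ^ 2 - K) / 2 ≤ P := by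
    refine le_of_tendsto_of_tendsto' ?_ hprod fun s => prod_ge u hu0 s
    exact (tendsto_const_nhds.add hsy).add (((hsy.pow 2).sub hsK).div_const 2)
  -- identify qExp
  have hfeq : (fun i : ℕ => 1 - (1 - q) * x * q ^ i) = f := by
    funext i; simp only [hf, hu, ht, hy]; ring
  have hqexp : qExp q x = P⁻¹ := by rw [qExp, hfeq, hprod.tprod_eq]
  have hEpos := Real.exp_pos y
  have hxy : Real.exp x = (Real.exp y)⁻¹ := by rw [hy, ← Real.exp_neg, neg_neg]
  constructor
  · rw [hqexp, hxy]
    exact inv_anti₀ hPpos hPle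
  · rw [hqexp, hxy]
    exact final_bound hq0 hq1 hy0 hK hPpos hEpos (by rwa [Real.log_exp]) hPgeC

/-- If `q_n ∈ (0,1)` and `q_n → 1`, then `e_{q_n}(x) → e^x` uniformly on `(-∞, 0]`. -/
theorem stmt13 (q : ℕ → ℝ) (hq : ∀ n, q n ∈ Set.Ioo (0 : ℝ) 1)
    (hq1 : Tendsto q atTop (nhds 1)) :
    TendstoUniformlyOn (fun n x => qExp (q n) x) Real.exp atTop (Set.Iic (0 : ℝ)) := by
  rw [Metric.tendstoUniformlyOn_iff]
  intro ε hε
  have hlt : max (1 - ε / 8) (1 / 2) < 1 := by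
    apply max_lt (by linarith) (by norm_num)
  have hev : ∀ᶠ n in atTop, max (1 - ε / 8) (1 / 2) < q n :=
    hq1.eventually (eventually_gt_nhds hlt)
  filter_upwards [hev] with n hn x hx
  have hn1 : 1 - ε / 8 < q n := lt_of_le_of_lt (le_max_left _ _) hn
  have hn2 : (1:ℝ) / 2 < q n := lt_of_le_of_lt (le_max_right _ _) hn
  obtain ⟨h0, h1⟩ := hq n
  obtain ⟨hA, hB⟩ := key h0 h1 hx
  rw [Real.dist_eq, abs_sub_comm, abs_of_nonneg (by linarith)]
  have : 2 * (1 - q n) / q n < ε := by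
    rw [div_lt_iff₀ h0]; nlinarith
  linarith
end
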